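/- arXiv:2509.01646 — 2 statements merged into one kernel-verified Lean document; each statement's English description precedes it below -/
import Mathlib

section
/- Let R be a commutative ring, S a multiplicative subset of R, M an R-module, and A_1, …, A_n finitely many R-modules. Then the direct sum ⊕_{i=1}^n A_i is u-S-projective relative to M if and only if each A_i is u-S-projective relative to M. -/
universe u v w

variable (R : Type u) [CommRing R]

/-- An `R`-module `T` is uniformly `S`-torsion if there is `s ∈ S` with `s • T = 0`. -/
def IsUSTorsion (S : Submonoid R) (T : Type*) [AddCommGroup T] [Module R T] : Prop :=
  ∃ s ∈ S, ∀ t : T, s • t = 0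

/-- `f` is a `u`-`S`-epimorphism if its cokernel is uniformly `S`-torsion. -/
def IsUSEpi (S : Submonoid R) {M N : Type*} [AddCommGroup M] [Module R M]
    [AddCommGroup N] [Module R N] (f : M →ₗ[R] N) : Prop :=
  IsUSTorsion R S (N ⧸ LinearMap.range f)

/-- `f` is a `u`-`S`-monomorphism if its kernel is uniformly `S`-torsion. -/
def IsUSMono (S : Submonoid R) {M N : Type*} [AddCommGroup M] [Module R M]
    [AddCommGroup N] [Module R N] (f : M →ₗ[R] N) : Prop :=
  IsUSTorsion R S (LinearMap.ker f)

/-- `P` is `u`-`S`-projective relative to `M` if for every `u`-`S`-epimorphism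
`f : M → N`, the induced map `Hom(P,M) → Hom(P,N)` is a `u`-`S`-epimorphism. -/
def IsUSProjRel (S : Submonoid R) (P : Type w) [AddCommGroup P] [Module R P]
    (M : Type v) [AddCommGroup M] [Module R M] : Prop :=
  ∀ (N : Type v) [AddCommGroup N] [Module R N] (f : M →ₗ[R] N),
    IsUSEpi R S f → IsUSEpi R S (LinearMap.llcomp (σ₁₂ := RingHom.id R) (σ₂₃ := RingHom.id R) (σ₁₃ := RingHom.id R) R P M N f)

/-- `E` is `u`-`S`-injective relative to `M` if for every `u`-`S`-monomorphism
`f : K → M`, the induced map `Hom(M,E) → Hom(K,E)` is a `u`-`S`-epimorphism. -/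
def IsUSInjRel (S : Submonoid R) (E : Type w) [AddCommGroup E] [Module R E]
    (M : Type v) [AddCommGroup M] [Module R M] : Prop :=
  ∀ (K : Type v) [AddCommGroup K] [Module R K] (f : K →ₗ[R] M),
    IsUSMono R S f → IsUSEpi R S (LinearMap.lcomp R E f)



lemma isUSEpi_iff' (S : Submonoid R) {M N : Type*} [AddCommGroup M] [Module R M]
    [AddCommGroup N] [Module R N] (f : M →ₗ[R] N) :
    IsUSEpi R S f ↔ ∃ s ∈ S, ∀ y : N, s • y ∈ LinearMap.range f := by
  constructor
  · rintro ⟨s, hs, h⟩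
    refine ⟨s, hs, fun y => ?_⟩
    have := h (Submodule.Quotient.mk y)
    rwa [← Submodule.Quotient.mk_smul, Submodule.Quotient.mk_eq_zero] at this
  · rintro ⟨s, hs, h⟩
    refine ⟨s, hs, fun t => ?_⟩
    obtain ⟨y, rfl⟩ := Submodule.Quotient.mk_surjective _ t
    rw [← Submodule.Quotient.mk_smul, Submodule.Quotient.mk_eq_zero]
    exact h y

open DirectSum in
theorem stmt3 (S : Submonoid R) (hS : (0 : R) ∉ S)
    (M : Type v) [AddCommGroup M] [Module R M]
    (n : ℕ) (A : Fin n → Type w) [∀ i, AddCommGroup (A i)] [∀ i, Module R (A i)] :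
    IsUSProjRel R S (⨁ i, A i) M ↔ ∀ i, IsUSProjRel R S (A i) M := by
  constructor
  · intro h i N _ _ f hf
    obtain ⟨s, hs, hall⟩ := (isUSEpi_iff' R S _).mp (h N f hf)
    rw [isUSEpi_iff']
    refine ⟨s, hs, fun g => ?_⟩
    obtain ⟨h', hh'⟩ := hall (g ∘ₗ DirectSum.component R (Fin n) A i)
    refine ⟨h' ∘ₗ DirectSum.lof R (Fin n) A i, ?_⟩
    ext x
    have := congrArg (fun k : (⨁ j, A j) →ₗ[R] N => k (DirectSum.lof R (Fin n) A i x)) hh'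
    simpa [DirectSum.component.lof_self] using this
  · intro h N _ _ f hf
    choose s hsS hs using fun i => (isUSEpi_iff' R S _).mp (h i N f hf)
    rw [isUSEpi_iff']
    refine ⟨∏ i, s i, Submonoid.prod_mem S (fun i _ => hsS i), fun g => ?_⟩
    choose lift hlift using fun i => hs i (g ∘ₗ DirectSum.lof R (Fin n) A i)
    refine ⟨∑ i, (∏ j ∈ Finset.univ.erase i, s j) • (lift i ∘ₗ DirectSum.component R (Fin n) A i), ?_⟩
    refine DirectSum.linearMap_ext R fun i => ?_
    ext x
    simp only [LinearMap.llcomp_apply, LinearMap.comp_apply, map_sum,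
      LinearMap.sum_apply, LinearMap.smul_apply, DirectSum.component.of]
    rw [Finset.sum_eq_single i]
    · simp only [dif_pos]
      have := congrArg (fun k : A i →ₗ[R] N => k x) (hlift i)
      simp only [LinearMap.llcomp_apply, LinearMap.comp_apply, LinearMap.smul_apply] at this
      rw [map_smul, this, smul_smul, Finset.prod_erase_mul _ _ (Finset.mem_univ i)]
    · intro j _ hji
      rw [dif_neg (Ne.symm hji)]
      simp
    · intro hi
      exact absurd (Finset.mem_univ i) hi
end

section
/- Let R be a commutative ring, S a multiplicative subset of R, and 0 → A →f B →g C → 0 a short u-S-exact sequence of R-modules. If A is u-S-injective relative to B, or if C is u-S-projective relative to B, then the sequence u-S-splits, i.e., there exist s ∈ S and an R-homomorphism f' : B → A with f'∘f = s·1_A. -/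
universe u v w

variable (R : Type u) [CommRing R]

theorem stmt14 (S : Submonoid R) (hS : (0 : R) ∉ S)
    (A B C : Type v)
    [AddCommGroup A] [Module R A] [AddCommGroup B] [Module R B]
    [AddCommGroup C] [Module R C]
    (f : A →ₗ[R] B) (g : B →ₗ[R] C)
    (hf : IsUSMono R S f) (hg : IsUSEpi R S g)
    (hmid : ∃ s ∈ S, (∀ x ∈ LinearMap.ker g, s • x ∈ LinearMap.range f) ∧
        (∀ x ∈ LinearMap.range f, s • x ∈ LinearMap.ker g))
    (hyp : IsUSInjRel R S A B ∨ IsUSProjRel R S C B) :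
    ∃ s ∈ S, ∃ f' : B →ₗ[R] A, f' ∘ₗ f = s • LinearMap.id := by
  rcases hyp with hinj | hproj
  · obtain ⟨s, hs, hall⟩ := hinj A f hf
    have h1 := hall (Submodule.Quotient.mk LinearMap.id)
    rw [← Submodule.Quotient.mk_smul, Submodule.Quotient.mk_eq_zero] at h1
    obtain ⟨f', hf'⟩ := h1
    exact ⟨s, hs, f', hf'⟩
  · obtain ⟨s₃, hs₃, hks₃⟩ := hf
    obtain ⟨s₂, hs₂, hmid1, hmid2⟩ := hmid
    obtain ⟨s₁, hs₁, hall⟩ := hproj C g hg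
    have h1 := hall (Submodule.Quotient.mk LinearMap.id)
    rw [← Submodule.Quotient.mk_smul, Submodule.Quotient.mk_eq_zero] at h1
    obtain ⟨h, hh⟩ := h1
    have hgh : ∀ c : C, g (h c) = s₁ • c := by
      intro c
      have := LinearMap.congr_fun hh c
      simpa using this
    have key : ∀ x y : A, f x = f y → s₃ • x = s₃ • y := by
      intro x y hxy
      have hmem : x - y ∈ LinearMap.ker f := by
        simp [LinearMap.mem_ker, hxy]
      have := hks₃ ⟨x - y, hmem⟩
      have h0 : s₃ • (x - y) = 0 := congrArg Subtype.val this
      rw [smul_sub, sub_eq_zero] at h0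
      exact h0
    have hker : ∀ b : B, s₁ • b - h (g b) ∈ LinearMap.ker g := by
      intro b
      simp [LinearMap.mem_ker, hgh]
    have hrange : ∀ b : B, ∃ y : A, f y = s₂ • (s₁ • b - h (g b)) := by
      intro b
      obtain ⟨y, hy⟩ := hmid1 _ (hker b)
      exact ⟨y, hy⟩
    choose a ha using hrange
    let f' : B →ₗ[R] A := {
      toFun := fun b => s₃ • a b
      map_add' := by
        intro x y
        have heq : f (a (x + y)) = f (a x + a y) := by
          simp only [map_add, ha]
          module
        show s₃ • a (x + y) = s₃ • a x + s₃ • a y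
        rw [key _ _ heq, smul_add]
      map_smul' := by
        intro r x
        have heq : f (a (r • x)) = f (r • a x) := by
          simp only [map_smul, ha]
          module
        show s₃ • a (r • x) = r • (s₃ • a x)
        rw [key _ _ heq, smul_comm] }
    refine ⟨s₃ * (s₂ * s₁), S.mul_mem hs₃ (S.mul_mem hs₂ hs₁), f', ?_⟩
    ext a0
    show s₃ • a (f a0) = (s₃ * (s₂ * s₁)) • a0
    have hgf : s₂ • g (f a0) = 0 := by
      have := hmid2 (f a0) ⟨a0, rfl⟩
      rw [LinearMap.mem_ker, map_smul] at this
      exact this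
    have heq : f (a (f a0)) = f ((s₂ * s₁) • a0) := by
      rw [ha, smul_sub, ← map_smul h, smul_comm s₂ s₁, hgf, map_zero,
        sub_zero, map_smul, smul_smul, mul_comm s₁ s₂]
    rw [key _ _ heq, smul_smul]
end
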